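/- arXiv:2309.04056 — 2 statements merged into one kernel-verified Lean document; each statement's English description precedes it below -/
import Mathlib

section
/- Let P, Ē ∈ ℝ^{q×q} with Ē invertible, L ∈ ℝ^{q×p}, C_ω ∈ ℝ^{p×p}, C̄ ∈ ℝ^{p×q}, and H₂ ∈ ℝ^{p×p} satisfy the structural constraint (H₂ C̄)ᵀ = P Ē⁻¹ L C_ω. Let ω̄ ≥ 0. Then for every e ∈ ℝ^q and every ω ∈ ℝ^p with |ω_i| ≤ ω̄ for all i, one has eᵀ P Ē⁻¹ L C_ω (−ω̄·sgn(H₂ C̄ e) − ω) ≤ 0. -/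
open Matrix Finset

/-- Componentwise sign vector: `(sgn s) i = 1` if `s i > 0`, `-1` if `s i < 0`, `0` otherwise. -/
noncomputable def sgn {k : Type*} (s : k → ℝ) : k → ℝ := fun i => Real.sign (s i)

/-- under the structural constraint `(H₂ C̄)ᵀ = P Ē⁻¹ L C_ω`, the noise-rejection
switching term dominates the bounded noise:
`eᵀ P Ē⁻¹ L C_ω (−ω̄·sgn(H₂ C̄ e) − ω) ≤ 0`. -/
theorem stmt3 {q p : ℕ}
    (P E : Matrix (Fin q) (Fin q) ℝ) (hE : IsUnit E.det)
    (L : Matrix (Fin q) (Fin p) ℝ) (Cω : Matrix (Fin p) (Fin p) ℝ)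
    (C : Matrix (Fin p) (Fin q) ℝ) (H₂ : Matrix (Fin p) (Fin p) ℝ)
    (hH₂ : (H₂ * C)ᵀ = P * E⁻¹ * L * Cω)
    (ωb : ℝ) (hωb : 0 ≤ ωb)
    (e : Fin q → ℝ) (ω : Fin p → ℝ) (hω : ∀ i, |ω i| ≤ ωb) :
    e ⬝ᵥ (P * E⁻¹ * L * Cω).mulVec (-(ωb • sgn ((H₂ * C).mulVec e)) - ω) ≤ 0 := by
  rw [← hH₂, dotProduct_mulVec, vecMul_transpose]
  set s := (H₂ * C).mulVec e with hs
  have : s ⬝ᵥ (-(ωb • sgn s) - ω) = ∑ i, (-(ωb * |s i|) - s i * ω i) := by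
    unfold dotProduct
    refine Finset.sum_congr rfl fun i _ => ?_
    simp only [Pi.sub_apply, Pi.neg_apply, Pi.smul_apply, smul_eq_mul, sgn]
    have h1 : s i * Real.sign (s i) = |s i| := by
      rcases lt_trichotomy (s i) 0 with h | h | h
      · rw [Real.sign_of_neg h, abs_of_neg h]; ring
      · simp [h]
      · rw [Real.sign_of_pos h, abs_of_pos h]; ring
    nlinarith [h1]
  rw [this]
  apply Finset.sum_nonpos
  intro i _
  have h2 : -(s i * ω i) ≤ |s i| * ωb := by
    calc -(s i * ω i) ≤ |s i * ω i| := neg_le_abs _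
      _ = |s i| * |ω i| := abs_mul _ _
      _ ≤ |s i| * ωb := by
          exact mul_le_mul_of_nonneg_left (hω i) (abs_nonneg _)
  nlinarith [h2]
end

section
/- Let Ā, P, Ē ∈ ℝ^{q×q} with P symmetric positive definite and Ē invertible, C̄ ∈ ℝ^{p×q}, N ∈ ℝ^{q×p}, B̄_f ∈ ℝ^{q×m}, C_ω ∈ ℝ^{p×p}, H₁ ∈ ℝ^{m×p}, H₂ ∈ ℝ^{p×p}. Set L = Ē P⁻¹ N and assume: (i) the matrix P Ē⁻¹ Ā + Āᵀ Ē⁻ᵀ P − N C̄ − C̄ᵀ Nᵀ is negative definite; (ii) (H₁ C̄)ᵀ = P Ē⁻¹ B̄_f and (H₂ C̄)ᵀ = P Ē⁻¹ L C_ω. Let ρ = c + η with c ≥ 0, η ≥ 0, and ω̄ ≥ 0. Let ē : ℝ → ℝ^q be differentiable and let d̄ : ℝ → ℝ^m, ω : ℝ → ℝ^p satisfy |d̄(t)_i| ≤ c and |ω(t)_j| ≤ ω̄ for all t, i, j. Suppose ē satisfies for all t the error dynamics Ē ē′(t) = (Ā − L C̄) ē(t) + L C_ω ( −ω̄·sgn(H₂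 C̄ ē(t)) − ω(t) ) + B̄_f ( d̄(t) − ρ·sgn(H₁ C̄ ē(t)) ). Then the function V(t) = ē(t)ᵀ P ē(t) is differentiable with V′(t) ≤ 0 for every t, and V′(t) < 0 whenever ē(t) ≠ 0. -/
open Matrix

/-!
Along a solution, `V′ = 2 ēᵀ (P Ē⁻¹) (Ē ē′)`. Since `P Ē⁻¹ L = N`, the linear part of the
dynamics contributes `ēᵀ M ē`, where `M` is the negative definite matrix of (i). By (ii) each
discontinuous input contributes a term `(v - k • sgn s) ⬝ᵥ s` with `s = Hᵢ C̄ ē`, which is `≤ 0`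
because the gain `k` (`ρ = c + η`, resp. `ω̄`) dominates the bound on the signal `v`
(`d̄`, resp. `-ω`).
-/

theorem Real.mul_sign_self_eq_abs (x : ℝ) : x * Real.sign x = |x| := by
  rcases lt_trichotomy x 0 with h | rfl | h
  · rw [Real.sign_of_neg h, abs_of_neg h, mul_neg_one]
  · simp
  · rw [Real.sign_of_pos h, abs_of_pos h, mul_one]

theorem sub_smul_sgn_dotProduct_nonpos {k : Type*} [Fintype k] {s v : k → ℝ} {r : ℝ}
    (hv : ∀ i, |v i| ≤ r) : (v - r • sgn s) ⬝ᵥ s ≤ 0 := by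
  refine Finset.sum_nonpos fun i _ => ?_
  have hvs : v i * s i ≤ r * |s i| :=
    (le_abs_self _).trans (abs_mul (v i) (s i) ▸
      mul_le_mul_of_nonneg_right (hv i) (abs_nonneg _))
  simp only [Pi.sub_apply, Pi.smul_apply, smul_eq_mul, sgn]
  rw [sub_mul, mul_assoc, mul_comm (Real.sign _), Real.mul_sign_self_eq_abs]
  linarith

section Calculus

variable {𝕜 n : Type*} [NontriviallyNormedField 𝕜] [Fintype n]
  {f g : 𝕜 → n → 𝕜} {f' g' : n → 𝕜} {t : 𝕜}

theorem HasDerivAt.dotProduct (hf : HasDerivAt f f' t) (hg : HasDerivAt g g' t) :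
    HasDerivAt (fun s => f s ⬝ᵥ g s) (f' ⬝ᵥ g t + f t ⬝ᵥ g') t := by
  simp only [_root_.dotProduct, ← Finset.sum_add_distrib]
  exact HasDerivAt.fun_sum fun i _ => (hasDerivAt_pi.1 hf i).mul (hasDerivAt_pi.1 hg i)

theorem HasDerivAt.mulVec {m : Type*} (A : Matrix m n 𝕜) (hf : HasDerivAt f f' t) :
    HasDerivAt (fun s => A *ᵥ f s) (A *ᵥ f') t :=
  hasDerivAt_pi.2 fun i => by
    have hAi := (hasDerivAt_const t (A i)).dotProduct hf
    rwa [zero_dotProduct, zero_add] at hAi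

theorem HasDerivAt.dotProduct_mulVec_self {P : Matrix n n 𝕜} (hP : Pᵀ = P)
    (hf : HasDerivAt f f' t) :
    HasDerivAt (fun s => f s ⬝ᵥ P *ᵥ f s) (2 * (f t ⬝ᵥ P *ᵥ f')) t := by
  convert hf.dotProduct (hf.mulVec P) using 1
  rw [two_mul, ← dotProduct_transpose_mulVec, hP]

end Calculus

section ErrorDynamics

variable {R n k l j : Type*} [CommRing R] [Fintype n] [Fintype k] [Fintype l] [Fintype j]
  {A P E : Matrix n n R} {C : Matrix l n R} {L : Matrix n l R}

theorem dotProduct_add_transpose_mulVec_self (K : Matrix n n R) (x : n → R) :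
    x ⬝ᵥ (K + Kᵀ) *ᵥ x = 2 * (x ⬝ᵥ K *ᵥ x) := by
  rw [add_mulVec, dotProduct_add, dotProduct_transpose_mulVec, two_mul]

theorem mul_sub_mul_add_transpose_eq [DecidableEq n] {N : Matrix n l R} (hP : Pᵀ = P)
    (hPdet : IsUnit P.det) (hE : IsUnit E.det) (hL : L = E * P⁻¹ * N) :
    P * E⁻¹ * (A - L * C) + (P * E⁻¹ * (A - L * C))ᵀ
      = P * E⁻¹ * A + Aᵀ * (E⁻¹)ᵀ * P - N * C - Cᵀ * Nᵀ := by
  have hPEL : P * E⁻¹ * L = N := by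
    rw [hL, Matrix.mul_assoc, Matrix.mul_assoc, nonsing_inv_mul_cancel_left E _ hE,
      mul_nonsing_inv_cancel_left P _ hPdet]
  rw [Matrix.mul_sub, ← Matrix.mul_assoc, hPEL]
  simp only [transpose_sub, transpose_mul, hP, Matrix.mul_assoc]
  abel

theorem dotProduct_mulVec_eq_of_error_dynamics [DecidableEq n] {Bf : Matrix n k R}
    {Cω : Matrix l j R} {H₁ : Matrix k l R} {H₂ : Matrix j l R} (hE : IsUnit E.det)
    (hH₁ : (H₁ * C)ᵀ = P * E⁻¹ * Bf) (hH₂ : (H₂ * C)ᵀ = P * E⁻¹ * L * Cω)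
    {x x' : n → R} {w : j → R} {u : k → R}
    (hx' : E *ᵥ x' = (A - L * C) *ᵥ x + (L * Cω) *ᵥ w + Bf *ᵥ u) :
    x ⬝ᵥ P *ᵥ x'
      = x ⬝ᵥ (P * E⁻¹ * (A - L * C)) *ᵥ x + w ⬝ᵥ (H₂ * C) *ᵥ x + u ⬝ᵥ (H₁ * C) *ᵥ x := by
  have hx'E : x' = E⁻¹ *ᵥ (E *ᵥ x') := by
    rw [mulVec_mulVec, nonsing_inv_mul _ hE, one_mulVec]
  rw [hx'E, hx']
  simp only [mulVec_mulVec, mulVec_add, ← Matrix.mul_assoc]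
  rw [← hH₁, ← hH₂, dotProduct_add, dotProduct_add,
    dotProduct_transpose_mulVec, dotProduct_transpose_mulVec]

end ErrorDynamics

theorem stmt6_general {q m p : ℕ}
    (A P E : Matrix (Fin q) (Fin q) ℝ)
    (hPsymm : Pᵀ = P) (hPpos : ∀ x : Fin q → ℝ, x ≠ 0 → 0 < x ⬝ᵥ P.mulVec x)
    (hE : IsUnit E.det)
    (C : Matrix (Fin p) (Fin q) ℝ) (N : Matrix (Fin q) (Fin p) ℝ)
    (Bf : Matrix (Fin q) (Fin m) ℝ) (Cω : Matrix (Fin p) (Fin p) ℝ)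
    (H₁ : Matrix (Fin m) (Fin p) ℝ) (H₂ : Matrix (Fin p) (Fin p) ℝ)
    (L : Matrix (Fin q) (Fin p) ℝ) (hL : L = E * P⁻¹ * N)
    (hNegDef : ∀ x : Fin q → ℝ, x ≠ 0 →
      x ⬝ᵥ (P * E⁻¹ * A + Aᵀ * (E⁻¹)ᵀ * P - N * C - Cᵀ * Nᵀ).mulVec x < 0)
    (hH₁ : (H₁ * C)ᵀ = P * E⁻¹ * Bf)
    (hH₂ : (H₂ * C)ᵀ = P * E⁻¹ * L * Cω)
    (c η ρ ωb : ℝ) (hη : 0 ≤ η) (hρ : ρ = c + η)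
    (e : ℝ → Fin q → ℝ) (he : Differentiable ℝ e)
    (d : ℝ → Fin m → ℝ) (ω : ℝ → Fin p → ℝ)
    (hd : ∀ t i, |d t i| ≤ c) (hω : ∀ t j, |ω t j| ≤ ωb)
    (hdyn : ∀ t, E.mulVec (deriv e t) =
      (A - L * C).mulVec (e t)
        + (L * Cω).mulVec (-(ωb • sgn ((H₂ * C).mulVec (e t))) - ω t)
        + Bf.mulVec (d t - ρ • sgn ((H₁ * C).mulVec (e t)))) :
    Differentiable ℝ (fun t => e t ⬝ᵥ P.mulVec (e t)) ∧
      (∀ t, deriv (fun t => e t ⬝ᵥ P.mulVec (e t)) t ≤ 0) ∧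
      (∀ t, e t ≠ 0 → deriv (fun t => e t ⬝ᵥ P.mulVec (e t)) t < 0) := by
  have hPdef : P.PosDef := posDef_iff_dotProduct_mulVec.2
    ⟨by rwa [IsHermitian, conjTranspose_eq_transpose_of_trivial], by simpa using hPpos⟩
  have hPdet : IsUnit P.det := (isUnit_iff_isUnit_det P).1 hPdef.isUnit
  have hV : ∀ t, HasDerivAt (fun t => e t ⬝ᵥ P *ᵥ e t) (2 * (e t ⬝ᵥ P *ᵥ deriv e t)) t :=
    fun t => (he t).hasDerivAt.dotProduct_mulVec_self hPsymm
  have hV_le : ∀ t, 2 * (e t ⬝ᵥ P *ᵥ deriv e t)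
      ≤ e t ⬝ᵥ (P * E⁻¹ * A + Aᵀ * (E⁻¹)ᵀ * P - N * C - Cᵀ * Nᵀ) *ᵥ e t := by
    intro t
    rw [← mul_sub_mul_add_transpose_eq hPsymm hPdet hE hL, dotProduct_add_transpose_mulVec_self,
      dotProduct_mulVec_eq_of_error_dynamics hE hH₁ hH₂ (hdyn t), neg_sub_comm]
    have hu := sub_smul_sgn_dotProduct_nonpos (s := (H₁ * C) *ᵥ e t)
      fun i => (hd t i).trans (le_add_of_nonneg_right hη) |>.trans_eq hρ.symm
    have hw := sub_smul_sgn_dotProduct_nonpos (s := (H₂ * C) *ᵥ e t) (v := -ω t)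
      fun i => (abs_neg (ω t i)).trans_le (hω t i)
    linarith
  refine ⟨fun t => (hV t).differentiableAt, fun t => ?_, fun t ht => ?_⟩
  · rw [(hV t).deriv]
    refine (hV_le t).trans ?_
    by_cases ht : e t = 0
    · simp [ht]
    · exact (hNegDef _ ht).le
  · rw [(hV t).deriv]
    exact (hV_le t).trans_lt (hNegDef _ ht)

/-- Theorem 1 of the paper: stability of the augmented sliding mode observer
error dynamics.  The Lyapunov function `V(t) = ē(t)ᵀ P ē(t)` is differentiable with `V′ ≤ 0`
everywhere and `V′(t) < 0` whenever `ē(t) ≠ 0`. -/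
theorem stmt6 {q m p : ℕ}
    (A P E : Matrix (Fin q) (Fin q) ℝ)
    (hPsymm : Pᵀ = P) (hPpos : ∀ x : Fin q → ℝ, x ≠ 0 → 0 < x ⬝ᵥ P.mulVec x)
    (hE : IsUnit E.det)
    (C : Matrix (Fin p) (Fin q) ℝ) (N : Matrix (Fin q) (Fin p) ℝ)
    (Bf : Matrix (Fin q) (Fin m) ℝ) (Cω : Matrix (Fin p) (Fin p) ℝ)
    (H₁ : Matrix (Fin m) (Fin p) ℝ) (H₂ : Matrix (Fin p) (Fin p) ℝ)
    (L : Matrix (Fin q) (Fin p) ℝ) (hL : L = E * P⁻¹ * N)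
    (hNegDef : ∀ x : Fin q → ℝ, x ≠ 0 →
      x ⬝ᵥ (P * E⁻¹ * A + Aᵀ * (E⁻¹)ᵀ * P - N * C - Cᵀ * Nᵀ).mulVec x < 0)
    (hH₁ : (H₁ * C)ᵀ = P * E⁻¹ * Bf)
    (hH₂ : (H₂ * C)ᵀ = P * E⁻¹ * L * Cω)
    (c η ρ ωb : ℝ) (hc : 0 ≤ c) (hη : 0 ≤ η) (hρ : ρ = c + η) (hωb : 0 ≤ ωb)
    (e : ℝ → Fin q → ℝ) (he : Differentiable ℝ e)
    (d : ℝ → Fin m → ℝ) (ω : ℝ → Fin p → ℝ)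
    (hd : ∀ t i, |d t i| ≤ c) (hω : ∀ t j, |ω t j| ≤ ωb)
    (hdyn : ∀ t, E.mulVec (deriv e t) =
      (A - L * C).mulVec (e t)
        + (L * Cω).mulVec (-(ωb • sgn ((H₂ * C).mulVec (e t))) - ω t)
        + Bf.mulVec (d t - ρ • sgn ((H₁ * C).mulVec (e t)))) :
    Differentiable ℝ (fun t => e t ⬝ᵥ P.mulVec (e t)) ∧
      (∀ t, deriv (fun t => e t ⬝ᵥ P.mulVec (e t)) t ≤ 0) ∧
      (∀ t, e t ≠ 0 → deriv (fun t => e t ⬝ᵥ P.mulVec (e t)) t < 0) :=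
  stmt6_general A P E hPsymm hPpos hE C N Bf Cω H₁ H₂ L hL hNegDef hH₁ hH₂ c η ρ ωb hη hρ e he d ω
    hd hω hdyn
end
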